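/- arXiv:2207.02641 — 11 statements merged into one kernel-verified Lean document; each statement's English description precedes it below -/
import Mathlib

section
/- If μ is an envy-free matching, then the reformist envy-free matching with respect to μ is unique; i.e., if σ and τ are both envy-free matchings obtained from μ by maximal sequences of single-agent improving exchanges that preserve envy-freeness, then σ = τ. -/
/-- An instance of the house allocation problem: each agent `i` has a finite set
`acc i` of acceptable items, and a strict total order on `acc i` represented by an
injective rank function (smaller rank = more preferred). -/
structure Instance (ι α : Type*) where
  acc : ι → Finset α
  rank : ι → α → ℕ
  rankInj : ∀ i, Set.InjOn (rank i) (acc i : Set α)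

variable {ι α : Type*}

/-- `I.Pref i x y` means agent `i` strictly prefers item `x` to item `y`. -/
def Instance.Pref (I : Instance ι α) (i : ι) (x y : α) : Prop :=
  x ∈ I.acc i ∧ y ∈ I.acc i ∧ I.rank i x < I.rank i y

/-- `I.WeakPref i x y` means `x = y` or agent `i` strictly prefers `x` to `y`. -/
def Instance.WeakPref (I : Instance ι α) (i : ι) (x y : α) : Prop :=
  x = y ∨ I.Pref i x y

/-- A matching assigns to each agent an acceptable item, injectively. -/
def IsMatching (I : Instance ι α) (μ : ι → α) : Prop :=
  Function.Injective μ ∧ ∀ i, μ i ∈ I.acc i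

/-- A matching is envy-free if no agent prefers another agent's item to her own. -/
def EnvyFree (I : Instance ι α) (μ : ι → α) : Prop :=
  IsMatching I μ ∧ ∀ i j, i ≠ j → ¬ I.Pref i (μ j) (μ i)

/-- `Step I μ σ` (written μ ⤳ σ in the paper): both `μ` and `σ` are envy-free
matchings and exactly one agent exchanges her item for a strictly better one. -/
def Step (I : Instance ι α) (μ σ : ι → α) : Prop :=
  EnvyFree I μ ∧ EnvyFree I σ ∧ ∃ i, I.Pref i (σ i) (μ i) ∧ ∀ j, j ≠ i → μ j = σ j

/-- `IsSeq I f ℓ`: the matchings `f 0 ⤳ f 1 ⤳ ... ⤳ f ℓ` form a sequence of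
single-agent improving exchanges preserving envy-freeness. -/
def IsSeq (I : Instance ι α) (f : ℕ → ι → α) (ℓ : ℕ) : Prop :=
  ∀ t, t < ℓ → Step I (f t) (f (t + 1))

/-- `σ` is a reformist envy-free matching with respect to `μ`: it is reachable
from `μ` via ⤳ and admits no further improving exchange. -/
def Reformist (I : Instance ι α) (μ σ : ι → α) : Prop :=
  Relation.ReflTransGen (Step I) μ σ ∧ ∀ τ, ¬ Step I σ τ

/-- `PrefList I i l`: agent `i`'s acceptable items are exactly those of `l`,
and `l` lists them from most preferred to least preferred. -/
def PrefList [DecidableEq α] (I : Instance ι α) (i : ι) (l : List α) : Prop :=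
  I.acc i = l.toFinset ∧ List.Chain' (I.Pref i) l

lemma Instance.Pref.trans' {I : Instance ι α} {i : ι} {x y z : α}
    (hxy : I.Pref i x y) (hyz : I.Pref i y z) : I.Pref i x z :=
  ⟨hxy.1, hyz.2.1, lt_trans hxy.2.2 hyz.2.2⟩

lemma step_diamond (I : Instance ι α) :
    ∀ a b c : ι → α, Step I a b → Step I a c →
      ∃ d, Relation.ReflGen (Step I) b d ∧ Relation.ReflTransGen (Step I) c d := by
  classical
  rintro a b c ⟨hae, hbe, i, hib, hab⟩ ⟨-, hce, j, hjc, hac⟩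
  by_cases hij : i = j
  · subst hij
    by_cases hbc : b i = c i
    · refine ⟨c, ?_, Relation.ReflTransGen.refl⟩
      have : b = c := by
        funext k
        by_cases hk : k = i
        · subst hk; exact hbc
        · exact ((hab k hk).symm.trans (hac k hk))
      rw [this]
    · have hbacc : b i ∈ I.acc i := hib.1
      have hcacc : c i ∈ I.acc i := hjc.1
      have hrne : I.rank i (b i) ≠ I.rank i (c i) := by
        intro h
        exact hbc (I.rankInj i hbacc hcacc h)
      rcases lt_or_gt_of_ne hrne with h | h
      · -- c can step to b
        refine ⟨b, Relation.ReflGen.refl, Relation.ReflTransGen.single ?_⟩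
        exact ⟨hce, hbe, i, ⟨hbacc, hcacc, h⟩,
          fun k hk => ((hac k hk).symm.trans (hab k hk))⟩
      · -- b can step to c
        refine ⟨c, Relation.ReflGen.single ?_, Relation.ReflTransGen.refl⟩
        exact ⟨hbe, hce, i, ⟨hcacc, hbacc, h⟩,
          fun k hk => ((hab k hk).symm.trans (hac k hk))⟩
  · -- distinct agents: combine the two exchanges
    have hbj : b j = a j := (hab j (Ne.symm hij)).symm
    have hci : c i = a i := (hac i hij).symm
    set ρ : ι → α := fun k => if k = j then c j else b k with hρ
    have hρj : ρ j = c j := by simp [hρ]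
    have hρi : ρ i = b i := by simp [hρ, hij]
    have hρo : ∀ k, k ≠ j → ρ k = b k := fun k hk => by simp [hρ, hk]
    -- key disjointness: c j ≠ b i
    have key : c j ≠ b i := by
      intro h
      apply hbe.2 j i (Ne.symm hij)
      rw [hbj]
      exact h ▸ hjc
    have hbinj := hbe.1.1
    have hcinj := hce.1.1
    have hbeqc : ∀ k, k ≠ i → k ≠ j → b k = c k := fun k hki hkj =>
      ((hab k hki).symm.trans (hac k hkj))
    have hρe : EnvyFree I ρ := by
      refine ⟨⟨?_, ?_⟩, ?_⟩
      · intro k l h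
        by_cases hk : k = j <;> by_cases hl : l = j
        · rw [hk, hl]
        · exfalso
          rw [hρo l hl, hk, hρj] at h
          by_cases hli : l = i
          · exact key (hli ▸ h)
          · rw [hbeqc l hli hl] at h
            exact hl (hcinj h.symm)
        · exfalso
          rw [hρo k hk, hl, hρj] at h
          by_cases hki : k = i
          · exact key (hki ▸ h).symm
          · rw [hbeqc k hki hk] at h
            exact hk (hcinj h)
        · rw [hρo k hk, hρo l hl] at h
          exact hbinj h
      · intro k
        by_cases hk : k = j
        · rw [hk, hρj]; exact hce.1.2 j
        · rw [hρo k hk]; exact hbe.1.2 k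
      · intro k l hkl hp
        by_cases hk : k = j <;> by_cases hl : l = j
        · exact hkl (hk.trans hl.symm)
        · rw [hk, hρj] at hp
          rw [hρo l hl] at hp
          by_cases hli : l = i
          · subst hli
            -- Pref j (b l) (c j), combine with Pref j (c j) (a j)
            exact hbe.2 j l (Ne.symm hij) (hbj ▸ (hp.trans' hjc))
          · rw [hbeqc l hli hl] at hp
            exact hce.2 j l (hk ▸ hkl) hp
        · rw [hl, hρj] at hp
          rw [hρo k hk] at hp
          by_cases hki : k = i
          · subst hki
            -- Pref k (c j) (b k), combine Pref k (b k) (a k), and c k = a k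
            exact hce.2 k j hij (hci ▸ (hp.trans' hib))
          · rw [hbeqc k hki hk] at hp
            exact hce.2 k j (hl ▸ hkl) hp
        · rw [hρo k hk, hρo l hl] at hp
          exact hbe.2 k l hkl hp
    refine ⟨ρ, Relation.ReflGen.single ?_, Relation.ReflTransGen.single ?_⟩
    · exact ⟨hbe, hρe, j, by rw [hρj, hbj]; exact hjc,
        fun k hk => (hρo k hk).symm⟩
    · refine ⟨hce, hρe, i, by rw [hρi, hci]; exact hib, fun k hk => ?_⟩
      by_cases hkj : k = j
      · rw [hkj, hρj]
      · rw [hρo k hkj, hbeqc k hk hkj]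

/-- the reformist envy-free matching with respect to `μ` is unique. -/
theorem reformist_unique (I : Instance ι α) (μ σ τ : ι → α)
    (hμ : EnvyFree I μ) (hσ : Reformist I μ σ) (hτ : Reformist I μ τ) :
    σ = τ := by
  obtain ⟨d, hσd, hτd⟩ :=
    Relation.church_rosser (step_diamond I) hσ.1 hτ.1
  have hnf : ∀ (x : ι → α), (∀ y, ¬ Step I x y) →
      ∀ z, Relation.ReflTransGen (Step I) x z → x = z := by
    intro x hx z hz
    rcases hz.cases_head with h | ⟨w, hw, -⟩
    · exact h
    · exact absurd hw (hx w)
  rw [hnf σ hσ.2 d hσd, hnf τ hτ.2 d hτd]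
end

section
/- For any envy-free matching μ, there exists a reformist envy-free matching with respect to μ, and any sequence μ = μ_0 ⤳ μ_1 ⤳ ... of envy-free matchings has length at most |M|·|N|. -/
variable {ι α : Type*}

lemma pref_trans (I : Instance ι α) (i : ι) {x y z : α}
    (h1 : I.Pref i x y) (h2 : I.Pref i y z) : I.Pref i x z :=
  ⟨h1.1, h2.2.1, h1.2.2.trans h2.2.2⟩

lemma pref_irrefl (I : Instance ι α) (i : ι) (x : α) : ¬ I.Pref i x x :=
  fun h => lt_irrefl _ h.2.2

noncomputable def Phi [Fintype ι] (I : Instance ι α) (μ : ι → α) : ℕ :=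
  ∑ i, Set.ncard {x | I.Pref i x (μ i)}

lemma step_phi [Fintype ι] [Fintype α] {I : Instance ι α} {μ σ : ι → α}
    (h : Step I μ σ) : Phi I σ < Phi I μ := by
  obtain ⟨-, -, i, hp, hoth⟩ := h
  have key : {x | I.Pref i x (σ i)} ⊂ {x | I.Pref i x (μ i)} := by
    constructor
    · intro x hx; exact pref_trans I i hx hp
    · intro hsub; exact pref_irrefl I i (σ i) (hsub hp)
  have strict : Set.ncard {x | I.Pref i x (σ i)} < Set.ncard {x | I.Pref i x (μ i)} :=
    Set.ncard_lt_ncard key (Set.toFinite _)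
  refine Finset.sum_lt_sum (fun j _ => ?_) ⟨i, Finset.mem_univ i, strict⟩
  rcases eq_or_ne j i with rfl | hj
  · exact strict.le
  · rw [hoth j hj]

lemma phi_le [Fintype ι] [Fintype α] (I : Instance ι α) (μ : ι → α) :
    Phi I μ ≤ Fintype.card α * Fintype.card ι := by
  have h : ∀ i : ι, Set.ncard {x | I.Pref i x (μ i)} ≤ Fintype.card α := by
    intro i
    have := Set.ncard_le_ncard (Set.subset_univ {x | I.Pref i x (μ i)}) Set.finite_univ
    simpa [Set.ncard_univ, Nat.card_eq_fintype_card] using this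
  calc Phi I μ ≤ ∑ _i : ι, Fintype.card α := Finset.sum_le_sum (fun i _ => h i)
    _ = Fintype.card α * Fintype.card ι := by
        simp [Finset.sum_const, Finset.card_univ, mul_comm]

lemma exists_reformist [Fintype ι] [Fintype α] (I : Instance ι α) :
    ∀ n (μ : ι → α), Phi I μ ≤ n → ∃ σ, Reformist I μ σ := by
  intro n
  induction n with
  | zero =>
    intro μ h
    by_cases hs : ∃ τ, Step I μ τ
    · obtain ⟨τ, hτ⟩ := hs
      exact absurd (step_phi hτ) (by omega)
    · exact ⟨μ, Relation.ReflTransGen.refl, fun τ ht => hs ⟨τ, ht⟩⟩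
  | succ n ih =>
    intro μ h
    by_cases hs : ∃ τ, Step I μ τ
    · obtain ⟨τ, hτ⟩ := hs
      obtain ⟨σ, hreach, hstop⟩ := ih τ (by have := step_phi hτ; omega)
      exact ⟨σ, Relation.ReflTransGen.head hτ hreach, hstop⟩
    · exact ⟨μ, Relation.ReflTransGen.refl, fun τ ht => hs ⟨τ, ht⟩⟩

/-- existence of a reformist envy-free matching, and every
⤳-sequence starting from `μ` has length at most `|M| · |N|`. -/
theorem reformist_exists_and_length_bound [Fintype ι] [Fintype α]
    (I : Instance ι α) (μ : ι → α) (hμ : EnvyFree I μ) :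
    (∃ σ, Reformist I μ σ) ∧
      ∀ (f : ℕ → ι → α) (ℓ : ℕ), f 0 = μ → IsSeq I f ℓ →
        ℓ ≤ Fintype.card α * Fintype.card ι := by
  constructor
  · exact exists_reformist I (Phi I μ) μ le_rfl
  · intro f ℓ h0 hseq
    have mono : ∀ t, t ≤ ℓ → t + Phi I (f t) ≤ Phi I (f 0) := by
      intro t
      induction t with
      | zero => simp
      | succ t ih =>
        intro ht
        have h1 := step_phi (hseq t (by omega))
        have h2 := ih (by omega)
        omega
    have := mono ℓ le_rfl
    have := phi_le I (f 0)
    omega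
end

section
/- If μ and σ are envy-free matchings with μ ⤳ σ via agent i (i.e., σ(i) ≻_i μ(i) and μ(j)=σ(j) for j≠i), then σ(i) is unassigned under μ, i.e., σ(i) ∉ μ(N). -/
variable {ι α : Type*}

/-- if `μ ⤳ σ` via agent `i`, then `σ i` is unassigned under `μ`. -/
theorem step_item_unassigned (I : Instance ι α) (μ σ : ι → α) (i : ι)
    (hμ : EnvyFree I μ) (hσ : EnvyFree I σ)
    (himp : I.Pref i (σ i) (μ i)) (hrest : ∀ j, j ≠ i → μ j = σ j) :
    σ i ∉ Set.range μ := by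
  rintro ⟨j, hj⟩
  by_cases hji : j = i
  · subst hji
    rw [hj] at himp
    exact lt_irrefl _ himp.2.2
  · exact hμ.2 i j (Ne.symm hji) (hj ▸ himp)
end

section
/- Let μ be an envy-free matching, σ a reformist envy-free matching with respect to μ, and τ another envy-free matching such that τ(j) ⪰_j μ(j) for every agent j. If there exists an agent i with σ(i) ≻_i τ(i), then τ is not a reformist envy-free matching with respect to μ. -/
variable {ι α : Type*}

/-- Auxiliary: if `τ` and `c` are envy-free, every agent other than `k` weakly
prefers (rank-wise) her `τ`-item to her `c`-item, but `k` strictly prefers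
`c k` to `τ k`, then there is an improving step from `τ`. -/
lemma step_exists_aux (I : Instance ι α) (τ c : ι → α) (k : ι)
    (hτ : EnvyFree I τ) (hc : EnvyFree I c)
    (hle : ∀ j, j ≠ k → I.rank j (τ j) ≤ I.rank j (c j))
    (hk : I.rank k (c k) < I.rank k (τ k)) :
    ∃ τ', Step I τ τ' := by
  classical
  set τ' := Function.update τ k (c k) with hτ'def
  have hτacc : ∀ j, τ j ∈ I.acc j := hτ.1.2
  have hcacc : ∀ j, c j ∈ I.acc j := hc.1.2
  have hτ'k : τ' k = c k := Function.update_self _ _ _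
  have hτ'j : ∀ j, j ≠ k → τ' j = τ j := fun j hj => Function.update_of_ne hj _ _
  have hτ'acc : ∀ j, τ' j ∈ I.acc j := by
    intro j
    by_cases hj : j = k
    · rw [hj, hτ'k]; exact hcacc k
    · rw [hτ'j j hj]; exact hτacc j
  -- `c k` is not held by anyone else in `τ`
  have hfree : ∀ m, m ≠ k → τ m ≠ c k := by
    intro m hm heq
    exact hτ.2 k m (Ne.symm hm) ⟨heq ▸ hcacc k, hτacc k, heq ▸ hk⟩
  have hinj : Function.Injective τ' := by
    intro a b hab
    by_cases ha : a = k <;> by_cases hb : b = k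
    · rw [ha, hb]
    · rw [ha, hτ'k, hτ'j b hb] at hab
      exact absurd hab.symm (hfree b hb)
    · rw [hb, hτ'k, hτ'j a ha] at hab
      exact absurd hab (hfree a ha)
    · rw [hτ'j a ha, hτ'j b hb] at hab
      exact hτ.1.1 hab
  have hτ'EF : EnvyFree I τ' := by
    refine ⟨⟨hinj, hτ'acc⟩, ?_⟩
    intro j m hjm hpref
    by_cases hj : j = k
    · rw [hj] at hpref hjm
      have hm : m ≠ k := Ne.symm hjm
      rw [hτ'j m hm, hτ'k] at hpref
      -- k prefers τ m to c k, hence to τ k : envy in τ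
      exact hτ.2 k m hjm ⟨hpref.1, hτacc k, hpref.2.2.trans hk⟩
    · rw [hτ'j j hj] at hpref
      by_cases hm : m = k
      · rw [hm, hτ'k] at hpref
        -- j prefers c k to τ j, hence to c j : envy in c
        exact hc.2 j k hj ⟨hpref.1, hcacc j, lt_of_lt_of_le hpref.2.2 (hle j hj)⟩
      · rw [hτ'j m hm] at hpref
        exact hτ.2 j m hjm hpref
  exact ⟨τ', hτ, hτ'EF, k, ⟨hτ'k ▸ hcacc k, hτacc k, hτ'k ▸ hk⟩,
    fun j hj => (hτ'j j hj).symm⟩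

/-- if `τ` is envy-free, weakly dominates `μ`, and some agent gets a
strictly better item in the reformist matching `σ` than in `τ`, then `τ` is not a
reformist envy-free matching with respect to `μ`. -/
theorem not_reformist_of_strictly_better (I : Instance ι α) (μ σ τ : ι → α)
    (hμ : EnvyFree I μ) (hσ : Reformist I μ σ) (hτ : EnvyFree I τ)
    (hdom : ∀ j, I.WeakPref j (τ j) (μ j))
    (hbetter : ∃ i, I.Pref i (σ i) (τ i)) :
    ¬ Reformist I μ τ := by
  intro hcontra
  obtain ⟨i, hi⟩ := hbetter
  have H : ∀ σ', Relation.ReflTransGen (Step I) μ σ' →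
      (∀ j, I.rank j (τ j) ≤ I.rank j (σ' j)) ∨ ∃ τ', Step I τ τ' := by
    intro σ' hchain
    induction hchain with
    | refl =>
      left; intro j
      rcases hdom j with h | h
      · rw [h]
      · exact le_of_lt h.2.2
    | @tail b c hab hbc ih =>
      rcases ih with hle | h
      · obtain ⟨hbEF, hcEF, k, hkpref, hrest⟩ := hbc
        by_cases hcase : I.rank k (τ k) ≤ I.rank k (c k)
        · left; intro j
          by_cases hj : j = k
          · subst hj; exact hcase
          · rw [← hrest j hj]; exact hle j
        · right
          exact step_exists_aux I τ c k hτ hcEF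
            (fun j hj => (hrest j hj) ▸ hle j) (lt_of_not_ge hcase)
      · right; exact h
  rcases H σ hσ.1 with hle | ⟨τ', hstep⟩
  · exact absurd (hle i) (not_le.mpr hi.2.2)
  · exact hcontra.2 τ' hstep
end

section
/- Let μ be an envy-free matching and σ the reformist envy-free matching with respect to μ, where σ(i) ≻_i μ(i) for every agent i. Then the image sets S = {μ(i) : i ∈ N} and R = {σ(i) : i ∈ N} are disjoint. -/
variable {ι α : Type*}

/-- if every agent strictly improves from `μ` to the reformist
matching `σ`, then the images of `μ` and `σ` are disjoint. -/
theorem images_disjoint (I : Instance ι α) (μ σ : ι → α)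
    (hμ : EnvyFree I μ) (hσ : Reformist I μ σ)
    (himp : ∀ i, I.Pref i (σ i) (μ i)) :
    Disjoint (Set.range μ) (Set.range σ) := by
  rw [Set.disjoint_left]
  rintro x ⟨i, rfl⟩ ⟨j, hj⟩
  by_cases hij : i = j
  · subst hij
    have h := himp i
    rw [hj] at h
    exact lt_irrefl _ h.2.2
  · have h := himp j
    rw [hj] at h
    exact hμ.2 j i (Ne.symm hij) h
end

section
/- Let μ be envy-free and σ the reformist envy-free matching with respect to μ. Define the directed graph D on vertex set N with an arc (i,j) whenever σ(i) = b(j), where for each agent j, b(j) denotes the unique item with σ(j) ≻_j b(j) ≻_j μ(j) (assuming each agent has exactly three acceptable items σ(j) ≻_j b(j) ≻_j μ(j)). Then D is acyclic. -/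
variable {ι α : Type*}

private lemma exists_seq_of_rtg (I : Instance ι α) {μ σ : ι → α}
    (h : Relation.ReflTransGen (Step I) μ σ) :
    ∃ ℓ f, f 0 = μ ∧ f ℓ = σ ∧ IsSeq I f ℓ := by
  induction h with
  | refl => exact ⟨0, fun _ => μ, rfl, rfl, fun t ht => absurd ht (Nat.not_lt_zero t)⟩
  | @tail p q hab hbc ih =>
    obtain ⟨ℓ, f, h0, hl, hs⟩ := ih
    refine ⟨ℓ + 1, fun t => if t ≤ ℓ then f t else q, by simp [h0], by simp, ?_⟩
    intro t ht
    rcases lt_or_eq_of_le (Nat.lt_succ_iff.mp ht) with h | h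
    · simpa [Nat.le_of_lt h, Nat.succ_le_of_lt h] using hs t h
    · subst h
      simpa [hl] using hbc

/-- when every agent has exactly three acceptable items
`σ i ≻ᵢ b i ≻ᵢ μ i`, the auxiliary digraph with an arc `(i,j)` whenever
`σ i = b j` is acyclic. -/
theorem auxiliary_digraph_acyclic [DecidableEq α] (I : Instance ι α) (μ σ b : ι → α)
    (hμ : EnvyFree I μ) (hσ : Reformist I μ σ)
    (hacc : ∀ i, I.acc i = {σ i, b i, μ i})
    (h1 : ∀ i, I.Pref i (σ i) (b i)) (h2 : ∀ i, I.Pref i (b i) (μ i)) :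
    ∀ i, ¬ Relation.TransGen (fun i j => σ i = b j) i i := by
  classical
  obtain ⟨ℓ, f, hf0, hfℓ, hseq⟩ := exists_seq_of_rtg I hσ.1
  have hef : ∀ t, t ≤ ℓ → EnvyFree I (f t) := by
    intro t ht
    rcases lt_or_eq_of_le ht with h | h
    · exact (hseq t h).1
    · subst h
      rcases Nat.eq_zero_or_pos t with h0 | h0
      · subst h0; rw [hf0]; exact hμ
      · have hstep := hseq (t - 1) (Nat.sub_lt h0 one_pos)
        have := hstep.2.1
        rwa [show t - 1 + 1 = t by omega] at this
  have hrank : ∀ i, I.rank i (σ i) < I.rank i (b i) := fun i => (h1 i).2.2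
  have hrank2 : ∀ i, I.rank i (σ i) < I.rank i (μ i) :=
    fun i => lt_trans (h1 i).2.2 (h2 i).2.2
  have hσμ : ∀ i, σ i ≠ μ i := by
    intro i h
    have := hrank2 i
    rw [h] at this
    exact lt_irrefl _ this
  have hexists : ∀ i, ∃ t, f t i = σ i := fun i => ⟨ℓ, by rw [hfℓ]⟩
  set T : ι → ℕ := fun i => Nat.find (hexists i) with hT
  have hTspec : ∀ i, f (T i) i = σ i := fun i => Nat.find_spec (hexists i)
  have hTle : ∀ i, T i ≤ ℓ := fun i => Nat.find_min' _ (by rw [hfℓ])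
  have hTpos : ∀ i, 1 ≤ T i := by
    intro i
    rcases Nat.eq_zero_or_pos (T i) with h | h
    · exfalso
      have := hTspec i
      rw [h, hf0] at this
      exact hσμ i this.symm
    · exact h
  have harc : ∀ p q, σ p = b q → T q ≤ T p := by
    intro p q hpq
    have hpq' : p ≠ q := by
      rintro rfl
      have := hrank p
      rw [hpq] at this
      exact lt_irrefl _ this
    have hefT := hef (T p) (hTle p)
    have hmatch := hefT.1
    have hq : f (T p) q ∈ I.acc q := hmatch.2 q
    rw [hacc q] at hq
    simp only [Finset.mem_insert, Finset.mem_singleton] at hq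
    have hfp : f (T p) p = b q := by rw [hTspec p, hpq]
    rcases hq with h | h | h
    · exact Nat.find_min' _ h
    · exact absurd (hmatch.1 (hfp.trans h.symm)) hpq'
    · exfalso
      apply hefT.2 q p hpq'.symm
      rw [hfp, h]
      exact h2 q
  have htrans : ∀ p q, Relation.TransGen (fun i j => σ i = b j) p q → T q ≤ T p := by
    intro p q h
    induction h with
    | single h => exact harc _ _ h
    | tail _ h ih => exact le_trans (harc _ _ h) ih
  intro i hcyc
  obtain ⟨c, hic, hci⟩ := Relation.TransGen.head'_iff.mp hcyc
  have hic' : i ≠ c := by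
    rintro rfl
    have := hrank i
    rw [hic] at this
    exact lt_irrefl _ this
  rcases (Relation.reflTransGen_iff_eq_or_transGen.mp hci) with h | h
  · exact hic' h
  · have hTeq : T i = T c := le_antisymm (htrans c i h) (harc i c hic)
    set t := T i - 1 with ht
    have ht1 : t + 1 = T i := Nat.sub_add_cancel (hTpos i)
    have htlt : t < ℓ := lt_of_lt_of_le (by omega) (hTle i)
    obtain ⟨k, _, hk⟩ := (hseq t htlt).2.2
    have hik : i = k := by
      by_contra hne
      have hkeep := hk i hne
      rw [ht1, hTspec i] at hkeep
      exact Nat.find_min (hexists i) (show t < T i by omega) hkeep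
    have hck : c = k := by
      by_contra hne
      have hkeep := hk c hne
      have ht1' : t + 1 = T c := by omega
      rw [ht1', hTspec c] at hkeep
      exact Nat.find_min (hexists c) (show t < T c by omega) hkeep
    exact hic' (hik.trans hck.symm)
end

section
/- If every agent has at most three acceptable items, then there exists a reformist sequence of length exactly |N| from any envy-free matching μ to the reformist envy-free matching σ, where we assume σ(i) ≻_i μ(i) for all i and σ(i) ⪰_i x ⪰_i μ(i) for all x ∈ M_i. Consequently, the shortest reformist sequence has length |N|. -/
variable {ι α : Type*}

private lemma exists_chain {I : Instance ι α} {μ σ : ι → α}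
    (h : Relation.ReflTransGen (Step I) μ σ) :
    ∃ (m : ℕ) (g : ℕ → ι → α), g 0 = μ ∧ g m = σ ∧ ∀ t < m, Step I (g t) (g (t + 1)) := by
  induction h with
  | refl => exact ⟨0, fun _ => μ, rfl, rfl, fun t ht => absurd ht (by omega)⟩
  | @tail b c hab hbc ih =>
    obtain ⟨m, g, h0, hm, hs⟩ := ih
    refine ⟨m + 1, fun t => if t < m + 1 then g t else c, by simp [h0], by simp, ?_⟩
    intro t ht
    rcases Nat.lt_or_ge t m with h1 | h1
    · have e1 : t < m + 1 := by omega
      have e2 : t + 1 < m + 1 := by omega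
      simpa [e1, e2] using hs t h1
    · have : t = m := by omega
      subst this
      have e1 : t < t + 1 := by omega
      have e2 : ¬ (t + 1 < t + 1) := by omega
      simpa [e1, e2, hm] using hbc

/-- if every agent accepts at most three items, there is a reformist
sequence of length exactly `|N|`, and every reformist sequence has length ≥ `|N|`,
so the shortest reformist sequence has length `|N|`. -/
theorem shortest_seq_at_most_three_items [Fintype ι] (I : Instance ι α) (μ σ : ι → α)
    (hμ : EnvyFree I μ) (hσ : Reformist I μ σ)
    (himp : ∀ i, I.Pref i (σ i) (μ i))
    (hbetween : ∀ i, ∀ x ∈ I.acc i, I.WeakPref i (σ i) x ∧ I.WeakPref i x (μ i))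
    (hcard : ∀ i, (I.acc i).card ≤ 3) :
    (∃ f : ℕ → ι → α, f 0 = μ ∧ IsSeq I f (Fintype.card ι) ∧
        f (Fintype.card ι) = σ) ∧
      ∀ (f : ℕ → ι → α) (ℓ : ℕ), f 0 = μ → IsSeq I f ℓ → f ℓ = σ →
        Fintype.card ι ≤ ℓ := by
  classical
  have hneq : ∀ i, σ i ≠ μ i := by
    intro i h
    have := (himp i).2.2
    rw [h] at this
    exact lt_irrefl _ this
  constructor
  · -- existence of a sequence of length |N|
    rcases isEmpty_or_nonempty ι with hι | hι
    · refine ⟨fun _ => μ, rfl, ?_, ?_⟩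
      · intro t ht
        rw [Fintype.card_eq_zero] at ht
        omega
      · funext i
        exact isEmptyElim i
    · obtain ⟨m, g, hg0, hgm, hgs⟩ := exists_chain hσ.1
      have hm1 : 1 ≤ m := by
        by_contra h
        have hm0 : m = 0 := by omega
        subst hm0
        obtain ⟨i⟩ := hι
        exact hneq i (by rw [← hgm, hg0])
      have hEFσ : EnvyFree I σ := by
        have := hgs (m - 1) (by omega)
        rw [show m - 1 + 1 = m by omega, hgm] at this
        exact this.2.1
      have hMσ : IsMatching I σ := hEFσ.1
      have hMμ : IsMatching I μ := hμ.1
      -- lemma A : σ i ≠ μ j  for i ≠ j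
      have hA : ∀ i j, i ≠ j → σ i ≠ μ j := by
        intro i j hij h
        exact hμ.2 i j hij (h ▸ himp i)
      have hEFt : ∀ t, t ≤ m → EnvyFree I (g t) := by
        intro t ht
        rcases Nat.eq_zero_or_pos t with h | h
        · subst h; rw [hg0]; exact hμ
        · have hs := hgs (t - 1) (by omega)
          rw [show t - 1 + 1 = t by omega] at hs
          exact hs.2.1
      -- finish times
      have hFeq : ∀ i : ι, ∃ t, g t i = σ i := fun i => ⟨m, by rw [hgm]⟩
      set F : ι → ℕ := fun i => Nat.find (hFeq i) with hFdef
      have hFspec : ∀ i, g (F i) i = σ i := fun i => Nat.find_spec (hFeq i)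
      have hFle : ∀ i, F i ≤ m := fun i => Nat.find_le (by rw [hgm])
      have hFpos : ∀ i, 1 ≤ F i := by
        intro i
        by_contra h
        have h0 : F i = 0 := by omega
        have := hFspec i
        rw [h0, hg0] at this
        exact hneq i this.symm
      have hFmin : ∀ i, g (F i - 1) i ≠ σ i := by
        intro i
        exact Nat.find_min (hFeq i) (show F i - 1 < F i by have := hFpos i; omega)
      -- the mover at step F j - 1 is j; all others are unchanged
      have hmover : ∀ j i, i ≠ j → g (F j - 1) i = g (F j) i := by
        intro j i hij
        have hs := hgs (F j - 1) (by have := hFle j; have := hFpos j; omega)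
        rw [show F j - 1 + 1 = F j by have := hFpos j; omega] at hs
        obtain ⟨k, _, hothers⟩ := hs.2.2
        by_cases hjk : j = k
        · exact hothers i (by rw [← hjk]; exact hij)
        · exfalso
          have := hothers j hjk
          rw [hFspec j] at this
          exact hFmin j this
      -- key lemma
      have hkey : ∀ i j, i ≠ j → σ j ∈ I.acc i → F i < F j := by
        intro i j hij hacc
        have hEF := hEFt (F j) (hFle j)
        have hMatch := hEF.1
        have hgi : g (F j) i ∈ I.acc i := hMatch.2 i
        have hgj : g (F j) j = σ j := hFspec j
        have hne1 : g (F j) i ≠ σ j := by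
          intro h
          exact hij (hMatch.1 (h.trans hgj.symm))
        have hnp := hEF.2 i j hij
        rw [hgj] at hnp
        have hlt : I.rank i (g (F j) i) < I.rank i (σ j) := by
          rcases lt_or_ge (I.rank i (g (F j) i)) (I.rank i (σ j)) with h | h
          · exact h
          · rcases Nat.lt_or_ge (I.rank i (σ j)) (I.rank i (g (F j) i)) with h' | h'
            · exact absurd ⟨hacc, hgi, h'⟩ hnp
            · exfalso
              exact hne1 (I.rankInj i hgi hacc (by omega))
        have hgtσ : g (F j) i = σ i := by
          by_contra hne2
          have d1 : σ j ≠ μ i := hA j i (Ne.symm hij)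
          have hrμ : I.rank i (σ j) < I.rank i (μ i) := by
            rcases (hbetween i (σ j) hacc).2 with h | h
            · exact absurd h d1
            · exact h.2.2
          have dσμ : σ i ≠ μ i := hneq i
          have dσσ : σ i ≠ σ j := fun h => hij (hMσ.1 h)
          have dgμ : g (F j) i ≠ μ i := by
            intro h
            rw [h] at hlt
            omega
          have hsub : ({g (F j) i, σ i, σ j, μ i} : Finset α) ⊆ I.acc i := by
            intro x hx
            simp only [Finset.mem_insert, Finset.mem_singleton] at hx
            rcases hx with h | h | h | h
            · rw [h]; exact hgi
            · rw [h]; exact (himp i).1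
            · rw [h]; exact hacc
            · rw [h]; exact (himp i).2.1
          have hcards : ({g (F j) i, σ i, σ j, μ i} : Finset α).card = 4 := by
            rw [Finset.card_insert_of_notMem (by simp [hne2, hne1, dgμ]),
              Finset.card_insert_of_notMem (by simp [dσσ, dσμ]),
              Finset.card_insert_of_notMem (by simp [d1]),
              Finset.card_singleton]
          have h1 := Finset.card_le_card hsub
          have h2 := hcard i
          omega
        have hprev : g (F j - 1) i = σ i := by
          rw [hmover j i hij, hgtσ]
        have : F i ≤ F j - 1 := Nat.find_le hprev
        have := hFpos j
        omega
      -- F is injective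
      have hFinj : Function.Injective F := by
        intro i j h
        by_contra hij
        have h1 := hmover i j (Ne.symm hij)
        rw [h] at h1
        rw [hFspec j] at h1
        exact hFmin j h1
      set n := Fintype.card ι with hn
      set r : ι → ℕ := fun i => (Finset.univ.filter (fun k => F k < F i)).card with hrdef
      have hrlt : ∀ i, r i < n := by
        intro i
        have : (Finset.univ.filter (fun k => F k < F i)) ⊂ Finset.univ := by
          rw [Finset.ssubset_iff_of_subset (Finset.filter_subset _ _)]
          refine ⟨i, Finset.mem_univ i, ?_⟩
          simp only [Finset.mem_filter, Finset.mem_univ, true_and, not_lt]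
          exact le_rfl
        have h2 := Finset.card_lt_card this
        rw [Finset.card_univ] at h2
        exact h2
      have hrmono : ∀ i j, F i < F j → r i < r j := by
        intro i j h
        apply Finset.card_lt_card
        rw [Finset.ssubset_iff_of_subset]
        · refine ⟨i, ?_, ?_⟩
          · simp only [Finset.mem_filter, Finset.mem_univ, true_and]
            exact h
          · simp only [Finset.mem_filter, Finset.mem_univ, true_and, not_lt]
            exact le_rfl
        · intro k hk
          simp only [Finset.mem_filter, Finset.mem_univ, true_and] at hk ⊢
          omega
      have hrinj : Function.Injective r := by
        intro i j h
        by_contra hij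
        have hFne : F i ≠ F j := fun he => hij (hFinj he)
        rcases hFne.lt_or_gt with h' | h'
        · exact absurd h (Nat.ne_of_lt (hrmono _ _ h'))
        · exact absurd h.symm (Nat.ne_of_lt (hrmono _ _ h'))
      have hr'bij : Function.Bijective (fun i => (⟨r i, hrlt i⟩ : Fin n)) := by
        rw [Fintype.bijective_iff_injective_and_card]
        constructor
        · intro i j h
          exact hrinj (by simpa using congrArg Fin.val h)
        · simp [hn]
      -- the sequence
      refine ⟨fun t i => if r i < t then σ i else μ i, ?_, ?_, ?_⟩
      · funext i; simp
      · intro t ht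
        obtain ⟨it, hit⟩ := hr'bij.2 ⟨t, ht⟩
        have hrit : r it = t := by
          have h' : (⟨r it, hrlt it⟩ : Fin n) = ⟨t, ht⟩ := hit
          simpa only [Fin.mk.injEq] using h'
        have hEFstep : ∀ s, EnvyFree I (fun i => if r i < s then σ i else μ i) := by
          intro s
          constructor
          · constructor
            · intro i j h
              by_contra hij
              simp only at h
              split_ifs at h with h1 h2 h2
              · exact hij (hMσ.1 h)
              · exact hA i j hij h
              · exact hA j i (Ne.symm hij) h.symm
              · exact hij (hMμ.1 h)
            · intro i
              simp only
              split_ifs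
              · exact hMσ.2 i
              · exact hMμ.2 i
          · intro i j hij
            simp only
            split_ifs with hj hi hi
            · exact hEFσ.2 i j hij
            · -- j moved, i unmoved : σ j would be envied
              intro hp
              have hacc : σ j ∈ I.acc i := hp.1
              have := hrmono i j (hkey i j hij hacc)
              omega
            · -- i moved, j unmoved
              intro hp
              have hacc : μ j ∈ I.acc i := hp.1
              rcases (hbetween i (μ j) hacc).1 with h | h
              · exact hA i j hij h
              · have := h.2.2
                have := hp.2.2
                omega
            · exact hμ.2 i j hij
        refine ⟨hEFstep t, hEFstep (t + 1), it, ?_, ?_⟩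
        · show I.Pref it (if r it < t + 1 then σ it else μ it) (if r it < t then σ it else μ it)
          rw [if_pos (by omega), if_neg (by omega)]
          exact himp it
        · intro j hj
          have hrj : r j ≠ t := fun h => hj (hrinj (h.trans hrit.symm))
          show (if r j < t then σ j else μ j) = (if r j < t + 1 then σ j else μ j)
          by_cases h : r j < t
          · rw [if_pos h, if_pos (by omega)]
          · rw [if_neg h, if_neg (by omega)]
      · funext i
        show (if r i < n then σ i else μ i) = σ i
        rw [if_pos (hrlt i)]
  · -- lower bound
    intro f ℓ h0 hseq hend
    have hmove : ∀ i : ι, ∃ t, t < ℓ ∧ f t i ≠ f (t + 1) i := by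
      intro i
      by_contra hc
      push_neg at hc
      have hconst : ∀ t, t ≤ ℓ → f t i = μ i := by
        intro t
        induction t with
        | zero => intro _; rw [h0]
        | succ s ih =>
          intro hs
          rw [← hc s (by omega), ih (by omega)]
      have := hconst ℓ le_rfl
      rw [hend] at this
      exact hneq i this
    choose T hT1 hT2 using hmove
    have hTinj : Function.Injective (fun i => (⟨T i, hT1 i⟩ : Fin ℓ)) := by
      intro i j h
      have ht : T i = T j := by simpa using congrArg Fin.val h
      obtain ⟨_, _, k, _, hoth⟩ := hseq (T i) (hT1 i)
      have hi : i = k := by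
        by_contra h'
        exact hT2 i (hoth i h')
      have hj : j = k := by
        by_contra h'
        exact hT2 j (ht ▸ hoth j h')
      rw [hi, hj]
    calc Fintype.card ι ≤ Fintype.card (Fin ℓ) := Fintype.card_le_of_injective _ hTinj
      _ = ℓ := Fintype.card_fin ℓ
end

section
/- In the instance with 3 agents and preferences ≻_1 : a_p, b_p, a_{p−1}, b_{p−1}, ..., a_1; ≻_2 : b_p, z, b_{p−1}, a_p, ..., b_1; ≻_3 : r, z, s, with initial matching (a_1, b_1, s), the sequence in which agent 3 exchanges s with r, agent 2 exchanges b_1 with z, agent 1 exchanges a_1 with a_p, and agent 2 exchanges z with b_p, is a valid reformist sequence of length 4 (all intermediate matchings are envy-free, and the final matching (a_p, b_p, r) admits no further improving exchange). -/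
variable {ι α : Type*}

section Helpers
set_option linter.unusedSectionVars false
variable [DecidableEq α] {I : Instance ι α} {i : ι} {x y a b : α} {l t : List α}

lemma pref_asymm (h : I.Pref i x y) : ¬ I.Pref i y x :=
  fun h' => lt_irrefl _ (h.2.2.trans h'.2.2)

lemma pref_irrefl_s10 : ¬ I.Pref i x x := fun h => lt_irrefl _ h.2.2

lemma not_pref_of_not_acc (hx : x ∉ I.acc i) : ¬ I.Pref i x y := fun h => hx h.1

lemma PrefList.mem_acc (h : PrefList I i l) : x ∈ I.acc i ↔ x ∈ l := by
  rw [h.1]; simp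

lemma PrefList.pairwise (h : PrefList I i l) : l.Pairwise (I.Pref i) := by
  haveI : IsTrans α (I.Pref i) :=
    ⟨fun a b c h1 h2 => ⟨h1.1, h2.2.1, lt_trans h1.2.2 h2.2.2⟩⟩
  exact List.isChain_iff_pairwise.mp h.2

lemma head_pref (h : PrefList I i (a :: t)) (hx : x ∈ I.acc i) (hne : x ≠ a) :
    I.Pref i a x := by
  have hm := h.mem_acc.mp hx
  rcases List.mem_cons.mp hm with rfl | hm
  · exact absurd rfl hne
  · exact (List.pairwise_cons.mp h.pairwise).1 x hm

lemma head_best (h : PrefList I i (a :: t)) : ¬ I.Pref i x a := by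
  intro hp
  by_cases hxa : x = a
  · subst hxa; exact pref_irrefl_s10 hp
  · exact pref_asymm (head_pref h hp.1 hxa) hp

lemma second_pref (h : PrefList I i (a :: b :: t)) (hx : x ∈ I.acc i)
    (h1 : x ≠ a) (h2 : x ≠ b) : I.Pref i b x := by
  have hm := h.mem_acc.mp hx
  rcases List.mem_cons.mp hm with rfl | hm
  · exact absurd rfl h1
  rcases List.mem_cons.mp hm with rfl | hm
  · exact absurd rfl h2
  · exact (List.pairwise_cons.mp (List.pairwise_cons.mp h.pairwise).2).1 x hm

lemma pref_second_eq (h : PrefList I i (a :: b :: t)) (hp : I.Pref i x b) : x = a := by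
  by_contra h1
  by_cases h2 : x = b
  · subst h2; exact pref_irrefl_s10 hp
  · exact pref_asymm (second_pref h hp.1 h1 h2) hp

lemma envyFree_mk {I : Instance (Fin 3) α} {x y z : α}
    (hxy : x ≠ y) (hxz : x ≠ z) (hyz : y ≠ z)
    (mx : x ∈ I.acc 0) (my : y ∈ I.acc 1) (mz : z ∈ I.acc 2)
    (h01 : ¬ I.Pref 0 y x) (h02 : ¬ I.Pref 0 z x)
    (h10 : ¬ I.Pref 1 x y) (h12 : ¬ I.Pref 1 z y)
    (h20 : ¬ I.Pref 2 x z) (h21 : ¬ I.Pref 2 y z) :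
    EnvyFree I ![x, y, z] := by
  refine ⟨⟨?_, ?_⟩, ?_⟩
  · intro a b hab
    fin_cases a <;> fin_cases b <;> simp_all
  · intro i; fin_cases i <;> simpa
  · intro i j hij
    fin_cases i <;> fin_cases j <;>
      first
      | exact absurd rfl hij
      | simpa using h01 | simpa using h02 | simpa using h10
      | simpa using h12 | simpa using h20 | simpa using h21
end Helpers

theorem small_example_explicit_sequence (p : ℕ) (hp : 2 ≤ p)
    (I : Instance (Fin 3) ((Fin p × Bool) ⊕ Fin 3))
    (h1 : PrefList I 0
      ((List.finRange p).reverse.flatMap fun j =>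
        if j.val = 0 then [Sum.inl (j, false)]
        else [Sum.inl (j, false), Sum.inl (j, true)]))
    (h2 : PrefList I 1
      ([Sum.inl ((⟨p - 1, by omega⟩ : Fin p), true), Sum.inr 2] ++
        ((List.finRange (p - 2)).flatMap fun m =>
          [Sum.inl ((⟨p - 2 - m.val, by omega⟩ : Fin p), true),
           Sum.inl ((⟨p - 1 - m.val, by omega⟩ : Fin p), false)]) ++
        [Sum.inl ((⟨0, by omega⟩ : Fin p), true)]))
    (h3 : PrefList I 2 [Sum.inr 0, Sum.inr 2, Sum.inr 1]) :
    Step I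
      ![Sum.inl ((⟨0, by omega⟩ : Fin p), false), Sum.inl ((⟨0, by omega⟩ : Fin p), true), Sum.inr 1]
      ![Sum.inl ((⟨0, by omega⟩ : Fin p), false), Sum.inl ((⟨0, by omega⟩ : Fin p), true), Sum.inr 0] ∧
    Step I
      ![Sum.inl ((⟨0, by omega⟩ : Fin p), false), Sum.inl ((⟨0, by omega⟩ : Fin p), true), Sum.inr 0]
      ![Sum.inl ((⟨0, by omega⟩ : Fin p), false), Sum.inr 2, Sum.inr 0] ∧
    Step I
      ![Sum.inl ((⟨0, by omega⟩ : Fin p), false), Sum.inr 2, Sum.inr 0]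
      ![Sum.inl ((⟨p - 1, by omega⟩ : Fin p), false), Sum.inr 2, Sum.inr 0] ∧
    Step I
      ![Sum.inl ((⟨p - 1, by omega⟩ : Fin p), false), Sum.inr 2, Sum.inr 0]
      ![Sum.inl ((⟨p - 1, by omega⟩ : Fin p), false), Sum.inl ((⟨p - 1, by omega⟩ : Fin p), true), Sum.inr 0] ∧
    ∀ τ, ¬ Step I
      ![Sum.inl ((⟨p - 1, by omega⟩ : Fin p), false), Sum.inl ((⟨p - 1, by omega⟩ : Fin p), true), Sum.inr 0] τ := by
  obtain ⟨q, rfl⟩ : ∃ q, p = q + 1 := ⟨p - 1, by omega⟩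
  have hq : 1 ≤ q := by omega
  -- abbreviations
  set A1 : (Fin (q+1) × Bool) ⊕ Fin 3 := Sum.inl (⟨0, by omega⟩, false) with hA1
  set B1 : (Fin (q+1) × Bool) ⊕ Fin 3 := Sum.inl (⟨0, by omega⟩, true) with hB1
  set Ap : (Fin (q+1) × Bool) ⊕ Fin 3 := Sum.inl (⟨q, by omega⟩, false) with hAp
  set Bp : (Fin (q+1) × Bool) ⊕ Fin 3 := Sum.inl (⟨q, by omega⟩, true) with hBp
  set R : (Fin (q+1) × Bool) ⊕ Fin 3 := Sum.inr 0 with hR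
  set S : (Fin (q+1) × Bool) ⊕ Fin 3 := Sum.inr 1 with hS
  set Z : (Fin (q+1) × Bool) ⊕ Fin 3 := Sum.inr 2 with hZ
  -- rewrite agent 0's list into cons form
  have e0 : ((List.finRange (q+1)).reverse.flatMap fun j =>
      if j.val = 0 then [Sum.inl (j, false)] else [Sum.inl (j, false), Sum.inl (j, true)]) =
      Ap :: Bp ::
      ((List.map Fin.castSucc (List.finRange q)).reverse.flatMap fun j =>
        if j.val = 0 then [Sum.inl (j, false)] else [Sum.inl (j, false), Sum.inl (j, true)]) := by
    rw [List.finRange_succ_last, List.reverse_append]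
    simp only [List.reverse_singleton, List.singleton_append, List.flatMap_cons]
    rw [if_neg (by simp [Fin.last]; omega)]
    rfl
  rw [e0] at h1
  have h2' : PrefList I 1 (Bp :: Z ::
      (((List.finRange (q+1-2)).flatMap fun m =>
          [Sum.inl ((⟨q+1-2-m.val, by omega⟩ : Fin (q+1)), true),
           Sum.inl ((⟨q+1-1-m.val, by omega⟩ : Fin (q+1)), false)]) ++ [B1])) := h2
  -- distinctness
  have dA1B1 : A1 ≠ B1 := by simp [hA1, hB1]
  have dA1Ap : A1 ≠ Ap := by simp [hA1, hAp, Fin.ext_iff]; omega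
  have dB1Bp : B1 ≠ Bp := by simp [hB1, hBp, Fin.ext_iff]; omega
  have dApBp : Ap ≠ Bp := by simp [hAp, hBp]
  have dApZ : Ap ≠ Bp := by simp [hAp, hBp]
  -- memberships
  have m0A1 : A1 ∈ I.acc 0 := by
    rw [h1.mem_acc]
    simp only [List.mem_cons, List.mem_flatMap, List.mem_reverse, List.mem_map,
      List.mem_finRange]
    right; right
    refine ⟨⟨0, by omega⟩, ⟨⟨0, by omega⟩, trivial, rfl⟩, ?_⟩
    simp [hA1, Fin.castSucc, Fin.ext_iff]
  have m0Ap : Ap ∈ I.acc 0 := by rw [h1.mem_acc]; simp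
  have n0B1 : B1 ∉ I.acc 0 := by
    rw [h1.mem_acc]
    simp only [List.mem_cons, List.mem_flatMap, List.mem_reverse, List.mem_map,
      List.mem_finRange, hB1, hAp, hBp]
    rintro (h|h|⟨j, -, hj⟩)
    · simp at h
    · simp [Fin.ext_iff] at h; omega
    · by_cases h : j.val = 0 <;> simp [h, Fin.ext_iff] at hj <;> omega
  have n0inr : ∀ k : Fin 3, Sum.inr k ∉ I.acc 0 := by
    intro k
    rw [h1.mem_acc]
    simp only [List.mem_cons, List.mem_flatMap, List.mem_reverse, List.mem_map,
      List.mem_finRange, hAp, hBp]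
    rintro (h|h|⟨j, -, hj⟩)
    · simp at h
    · simp at h
    · by_cases h : j.val = 0 <;> simp [h] at hj
  have m1B1 : B1 ∈ I.acc 1 := by rw [h2'.mem_acc]; simp
  have m1Z : Z ∈ I.acc 1 := by rw [h2'.mem_acc]; simp
  have m1Bp : Bp ∈ I.acc 1 := by rw [h2'.mem_acc]; simp
  have n1A1 : A1 ∉ I.acc 1 := by
    rw [h2'.mem_acc]
    simp only [List.mem_cons, List.mem_append, List.mem_flatMap, List.mem_finRange,
      List.mem_singleton, hA1, hBp, hB1, hZ]
    rintro (h|h|⟨m, -, (h|h)⟩|h) <;> simp [Fin.ext_iff] at h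
    omega
  have n1R : R ∉ I.acc 1 := by
    rw [h2'.mem_acc]
    simp only [List.mem_cons, List.mem_append, List.mem_flatMap, List.mem_finRange,
      List.mem_singleton, hR, hBp, hB1, hZ]
    rintro (h|h|⟨m, -, (h|h)⟩|h) <;> simp at h
  have n1S : S ∉ I.acc 1 := by
    rw [h2'.mem_acc]
    simp only [List.mem_cons, List.mem_append, List.mem_flatMap, List.mem_finRange,
      List.mem_singleton, hS, hBp, hB1, hZ]
    rintro (h|h|⟨m, -, (h|h)⟩|h) <;> simp at h
  have m2S : S ∈ I.acc 2 := by rw [h3.mem_acc]; simp [hS]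
  have m2R : R ∈ I.acc 2 := by rw [h3.mem_acc]; simp [hR]
  have n2inl : ∀ (y : Fin (q+1) × Bool), Sum.inl y ∉ I.acc 2 := by
    intro y
    rw [h3.mem_acc]; simp
  -- preference facts
  have p0 : I.Pref 0 Ap A1 := head_pref h1 m0A1 dA1Ap
  have best0 : ∀ x, ¬ I.Pref 0 x Ap := fun x => head_best h1
  have p1ZB1 : I.Pref 1 Z B1 := second_pref h2' m1B1 dB1Bp (by simp [hB1, hZ])
  have p1BpZ : I.Pref 1 Bp Z := head_pref h2' m1Z (by simp [hBp, hZ])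
  have sec1 : ∀ x, I.Pref 1 x Z → x = Bp := fun x => pref_second_eq h2'
  have best1 : ∀ x, ¬ I.Pref 1 x Bp := fun x => head_best h2'
  have p2RS : I.Pref 2 R S := head_pref h3 m2S (by simp [hR, hS])
  have best2 : ∀ x, ¬ I.Pref 2 x R := fun x => head_best h3
  have n1Ap : ¬ I.Pref 1 Ap Z := fun h => dApBp (sec1 _ h)
  -- envy-free matchings
  have EF0 : EnvyFree I ![A1, B1, S] :=
    envyFree_mk dA1B1 (by simp [hA1, hS]) (by simp [hB1, hS]) m0A1 m1B1 m2S
      (not_pref_of_not_acc n0B1) (not_pref_of_not_acc (n0inr 1))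
      (not_pref_of_not_acc n1A1) (not_pref_of_not_acc n1S)
      (not_pref_of_not_acc (n2inl _)) (not_pref_of_not_acc (n2inl _))
  have EF1 : EnvyFree I ![A1, B1, R] :=
    envyFree_mk dA1B1 (by simp [hA1, hR]) (by simp [hB1, hR]) m0A1 m1B1 m2R
      (not_pref_of_not_acc n0B1) (not_pref_of_not_acc (n0inr 0))
      (not_pref_of_not_acc n1A1) (not_pref_of_not_acc n1R)
      (best2 _) (best2 _)
  have EF2 : EnvyFree I ![A1, Z, R] :=
    envyFree_mk (by simp [hA1, hZ]) (by simp [hA1, hR]) (by simp [hZ, hR])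
      m0A1 m1Z m2R
      (not_pref_of_not_acc (n0inr 2)) (not_pref_of_not_acc (n0inr 0))
      (not_pref_of_not_acc n1A1) (not_pref_of_not_acc n1R)
      (best2 _) (best2 _)
  have EF3 : EnvyFree I ![Ap, Z, R] :=
    envyFree_mk (by simp [hAp, hZ]) (by simp [hAp, hR]) (by simp [hZ, hR])
      m0Ap m1Z m2R
      (not_pref_of_not_acc (n0inr 2)) (not_pref_of_not_acc (n0inr 0))
      n1Ap (not_pref_of_not_acc n1R)
      (best2 _) (best2 _)
  have EF4 : EnvyFree I ![Ap, Bp, R] :=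
    envyFree_mk dApBp (by simp [hAp, hR]) (by simp [hBp, hR]) m0Ap m1Bp m2R
      (best0 _) (best0 _) (best1 _) (best1 _) (best2 _) (best2 _)
  refine ⟨⟨EF0, EF1, 2, ?_, ?_⟩, ⟨EF1, EF2, 1, ?_, ?_⟩, ⟨EF2, EF3, 0, ?_, ?_⟩,
    ⟨EF3, EF4, 1, ?_, ?_⟩, ?_⟩
  · simpa using p2RS
  · intro j hj; fin_cases j <;> first | rfl | exact absurd rfl hj
  · simpa using p1ZB1
  · intro j hj; fin_cases j <;> first | rfl | exact absurd rfl hj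
  · simpa using p0
  · intro j hj; fin_cases j <;> first | rfl | exact absurd rfl hj
  · simpa using p1BpZ
  · intro j hj; fin_cases j <;> first | rfl | exact absurd rfl hj
  · rintro τ ⟨-, -, i, hpref, -⟩
    fin_cases i
    · exact best0 _ (by simpa using hpref)
    · exact best1 _ (by simpa using hpref)
    · exact best2 _ (by simpa using hpref)
end

section
/- Given two envy-free matchings μ and τ, if there exists an agent i with μ(i) ≻_i τ(i), then τ is not reachable from μ by a sequence of single-agent improving exchanges preserving envy-freeness. -/
variable {ι α : Type*}

/-- if some agent strictly prefers her item in `μ` to her item in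
`τ`, then `τ` is not reachable from `μ` via improving exchanges. -/
theorem not_reachable_of_worse (I : Instance ι α) (μ τ : ι → α)
    (hμ : EnvyFree I μ) (hτ : EnvyFree I τ)
    (h : ∃ i, I.Pref i (μ i) (τ i)) :
    ¬ Relation.ReflTransGen (Step I) μ τ := by
  obtain ⟨i, hi⟩ := h
  intro hreach
  have key : ∀ σ, Relation.ReflTransGen (Step I) μ σ →
      ∀ j, I.rank j (σ j) ≤ I.rank j (μ j) := by
    intro σ hr j
    induction hr with
    | refl => exact le_refl _
    | tail _ hstep ih =>
      obtain ⟨_, _, k, hk, hrest⟩ := hstep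
      by_cases hjk : j = k
      · subst hjk
        exact le_trans (le_of_lt hk.2.2) ih
      · rw [← hrest j hjk]; exact ih
  exact absurd (key τ hreach i) (not_le.mpr hi.2.2)
end

section
/- Let μ be an envy-free matching and let x ∈ M_i be an item with μ(i) ≻_i x. Then in any envy-free matching τ that is reachable from μ via the relation ⤳, agent i does not envy any agent holding x; in particular removing x from M_i does not affect which matchings are envy-free and reachable from μ. -/
variable {ι α : Type*}

/-- if `μ i ≻ᵢ x`, then in any envy-free matching reachable from
`μ`, agent `i` does not envy an agent holding `x`. -/
theorem no_envy_for_dominated_item (I : Instance ι α) (μ : ι → α) (i : ι) (x : α)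
    (hμ : EnvyFree I μ) (hx : x ∈ I.acc i) (hpref : I.Pref i (μ i) x) :
    ∀ τ, Relation.ReflTransGen (Step I) μ τ → ¬ I.Pref i x (τ i) := by
  intro τ hreach hcon
  have key : ∀ σ, Relation.ReflTransGen (Step I) μ σ → I.rank i (σ i) ≤ I.rank i (μ i) := by
    intro σ hσ
    induction hσ with
    | refl => exact le_rfl
    | tail hab hbc ih =>
      obtain ⟨_, _, j, hj, hrest⟩ := hbc
      by_cases h : i = j
      · subst h
        exact le_trans (le_of_lt hj.2.2) ih
      · rw [← hrest i h]; exact ih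
  have h1 := key τ hreach
  have := hpref.2.2
  have := hcon.2.2
  omega
end

section
/- Let μ be envy-free with reformist envy-free matching σ, and let K = M \ ({μ(i) : i ∈ N} ∪ {σ(i) : i ∈ N}). If no agent i can exchange μ(i) with σ(i) while preserving envy-freeness, and μ ≠ σ, then the first exchange in every reformist sequence assigns to some agent i an item x ∈ K ∩ M_i such that x ∉ M_j for every agent j ≠ i. -/
variable {ι α : Type*}

/-- after preprocessing, if no agent can exchange her initial item
directly for her final item and `μ ≠ σ`, then the first exchange of every
reformist sequence gives some agent `i` an intermediate item `x` (unassigned in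
both `μ` and `σ`) acceptable to `i` only. -/
theorem first_exchange_uses_private_intermediate_item [DecidableEq ι]
    (I : Instance ι α) (μ σ : ι → α)
    (hμ : EnvyFree I μ) (hσ : Reformist I μ σ)
    (himp : ∀ i, I.Pref i (σ i) (μ i))
    (hbetween : ∀ i, ∀ x ∈ I.acc i, I.WeakPref i (σ i) x ∧ I.WeakPref i x (μ i))
    (hstuck : ∀ i, ¬ EnvyFree I (Function.update μ i (σ i)))
    (hne : μ ≠ σ) :
    ∀ (f : ℕ → ι → α) (ℓ : ℕ), f 0 = μ → IsSeq I f ℓ → f ℓ = σ → 0 < ℓ →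
      ∃ i x, x ∉ Set.range μ ∧ x ∉ Set.range σ ∧ x ∈ I.acc i ∧
        (∀ j, j ≠ i → x ∉ I.acc j) ∧ f 1 = Function.update μ i x := by
  intro f ℓ h0 hseq hl hpos
  have hstep : Step I μ (f 1) := by
    have := hseq 0 hpos
    rwa [h0] at this
  obtain ⟨hEFμ, hEF1, i, hpref, hfix⟩ := hstep
  set x := f 1 i with hx
  have hxacc : x ∈ I.acc i := hpref.1
  have hxneμ : x ≠ μ i := fun h => by
    have := hpref.2.2; rw [h] at this; exact lt_irrefl _ this
  have hinj1 : Function.Injective (f 1) := hEF1.1.1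
  -- x not in range μ
  have hμr : x ∉ Set.range μ := by
    rintro ⟨j, hj⟩
    by_cases hji : j = i
    · exact hxneμ (hji ▸ hj.symm)
    · have : f 1 j = f 1 i := by rw [← hfix j hji, hj]
      exact hji (hinj1 this)
  -- x not in range σ
  have hσr : x ∉ Set.range σ := by
    rintro ⟨j, hj⟩
    by_cases hji : j = i
    · subst hji
      apply hstuck j
      have : Function.update μ j (σ j) = f 1 := by
        funext k
        by_cases hk : k = j
        · subst hk; simp only [Function.update_self]; exact hj
        · rw [Function.update_of_ne hk, hfix k hk]
      rwa [this]
    · -- j envies i in f 1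
      have henvy : I.Pref j (f 1 i) (f 1 j) := by
        rw [← hfix j hji, show f 1 i = σ j from hj.symm]
        exact himp j
      exact hEF1.2 j i hji henvy
  -- x acceptable only to i
  have honly : ∀ j, j ≠ i → x ∉ I.acc j := by
    intro j hji hxj
    have hb := (hbetween j x hxj).2
    have hxneμj : x ≠ μ j := fun h => hμr ⟨j, h.symm⟩
    have hpxj : I.Pref j x (μ j) := hb.resolve_left hxneμj
    have henvy : I.Pref j (f 1 i) (f 1 j) := by
      rw [← hfix j hji]; exact hpxj
    exact hEF1.2 j i hji henvy
  refine ⟨i, x, hμr, hσr, hxacc, honly, ?_⟩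
  funext k
  by_cases hk : k = i
  · subst hk; simp [Function.update_self, hx]
  · rw [Function.update_of_ne hk, ← hfix k hk]
end
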